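/- arXiv:0906.2252 — 2 statements merged into one kernel-verified Lean document; each statement's English description precedes it below -/
import Mathlib

section
/- (Theorem 1, expectation form.) Let μ be a probability measure on pairs (H1,H2) ∈ ℂ^{r×t_x} × ℂ^{r×t_s} such that μ-almost every pair satisfies the genericity condition: for every (t_x+t_s)×(t_x+t_s) Hermitian positive semidefinite matrix A, rank([H1 H2] A [H1 H2]*) = min(r, rank A). Let Σ̄X ∈ ℂ^{t_x×t_x} and ΣZ ∈ ℂ^{r×r} be Hermitian positive definite, Σ̄S ∈ ℂ^{t_s×t_s} Hermitian positive semidefinite, c > 0, and W ∈ ℂ^{t_x×t_s} a fixed inflation factor. For P ≥ 1 put ΣX = P·Σ̄X, ΣS = cP·Σ̄S and let f_P(H1,H2) = log( det ΣX · det(ΣZ + H1 ΣX H1* + H2 ΣS H2*) / det M(W;ΣX,ΣS,ΣZ) ). Assume f_P is μ-integrable for each P ≥ 2 and that there is a μ-integrable function g with |f_P(H1,H2)|/log P ≤ g(H1,H2) μ-a.e. for all P ≥ 2. Then ( ∫ f_P dμ ) / log P tends, as P → ∞, to min(r, t_x + rank Σ̄S) − min(r, rank Σ̄S); in particular this limit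 is the same for every such W, and equals the value for W = 0. -/
open Matrix Filter MeasureTheory
open scoped ComplexOrder

/-- Measurable structure on matrices, transported from the pi type `m → n → ℂ`. -/
noncomputable instance matrixMeasurableSpace (m n : Type*) : MeasurableSpace (Matrix m n ℂ) :=
  inferInstanceAs (MeasurableSpace (m → n → ℂ))

/-- The DPC covariance block matrix
`M(W; ΣX, ΣS, ΣZ) = [[ΣX + W ΣS W*, ΣX H1* + W ΣS H2*],
                     [H1 ΣX + H2 ΣS W*, ΣZ + H1 ΣX H1* + H2 ΣS H2*]]`. -/
noncomputable def dpcM {r tx ts : ℕ}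
    (H1 : Matrix (Fin r) (Fin tx) ℂ) (H2 : Matrix (Fin r) (Fin ts) ℂ)
    (W : Matrix (Fin tx) (Fin ts) ℂ)
    (SX : Matrix (Fin tx) (Fin tx) ℂ) (SS : Matrix (Fin ts) (Fin ts) ℂ)
    (SZ : Matrix (Fin r) (Fin r) ℂ) :
    Matrix (Fin tx ⊕ Fin r) (Fin tx ⊕ Fin r) ℂ :=
  fromBlocks (SX + W * SS * Wᴴ) (SX * H1ᴴ + W * SS * H2ᴴ)
    (H1 * SX + H2 * SS * Wᴴ) (SZ + H1 * SX * H1ᴴ + H2 * SS * H2ᴴ)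

/-- The per-realization DPC rate `f_P(H1, H2)` at power `P`, interference power `cP`,
inflation factor `W`, with base covariances `Σ̄X, Σ̄S` and noise covariance `ΣZ`. -/
noncomputable def dpcRate {r tx ts : ℕ}
    (W : Matrix (Fin tx) (Fin ts) ℂ)
    (SXb : Matrix (Fin tx) (Fin tx) ℂ) (SSb : Matrix (Fin ts) (Fin ts) ℂ)
    (SZ : Matrix (Fin r) (Fin r) ℂ) (c P : ℝ)
    (H : Matrix (Fin r) (Fin tx) ℂ × Matrix (Fin r) (Fin ts) ℂ) : ℝ :=
  Real.log ((((P : ℂ) • SXb).det.re *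
      (SZ + H.1 * ((P : ℂ) • SXb) * H.1ᴴ
         + H.2 * (((c * P : ℝ) : ℂ) • SSb) * H.2ᴴ).det.re) /
    (dpcM H.1 H.2 W ((P : ℂ) • SXb) (((c * P : ℝ) : ℂ) • SSb) SZ).det.re)

/-!
With `ΣX = P • Σ̄X` and `ΣS = P • (c • Σ̄S)`, each of the three determinants in `f_P` has the
form `det (E + P • K)` with `K ⪰ 0` and `E + K ≻ 0`. Writing `E + K = Q Qᴴ`, this determinant
is `det (E + K) * ∏ i, (1 + (P - 1) βᵢ)` with `βᵢ ≥ 0` the eigenvalues of `Q⁻¹ K Q⁻ᴴ`, so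
`log det (E + P • K) / log P → rank K`. The three ranks are `t_x`,
`rank (H1 Σ̄X H1ᴴ + c H2 Σ̄S H2ᴴ) = min r (t_x + rank Σ̄S)` and
`rank M(W; Σ̄X, c Σ̄S, 0) = t_x + min r (rank Σ̄S)`, both by genericity; in the last one a block
row operation replaces `H2` by `H2 - H1 W`, which is where `W` drops out. Dominated convergence
moves the pointwise limit under the integral.
-/

theorem tendsto_log_one_add_sub_one_mul_div_log {β : ℝ} (hβ : 0 < β) :
    Tendsto (fun P : ℝ => Real.log (1 + (P - 1) * β) / Real.log P) atTop (nhds 1) := by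
  have hlim : Tendsto (fun P : ℝ => Real.log (β + (1 - β) * P⁻¹)) atTop (nhds (Real.log β)) :=
    (Real.continuousAt_log hβ.ne').tendsto.comp <| by
      simpa using tendsto_const_nhds.add (tendsto_inv_atTop_zero.const_mul (1 - β))
  have := (hlim.div_atTop Real.tendsto_log_atTop).const_add 1
  rw [add_zero] at this
  refine this.congr' ?_
  filter_upwards [eventually_gt_atTop 1] with P hP
  have hP0 : 0 < P := by linarith
  have hfactor : 1 + (P - 1) * β = P * (β + (1 - β) * P⁻¹) := by field_simp; ring
  have harg : 0 < β + (1 - β) * P⁻¹ := by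
    have : 0 < 1 + (P - 1) * β := by nlinarith
    rw [hfactor] at this
    exact pos_of_mul_pos_right this hP0.le
  rw [hfactor, Real.log_mul hP0.ne' harg.ne', add_div, div_self (Real.log_pos hP).ne']

theorem tendsto_log_mul_prod_div_log {ι : Type*} [Fintype ι] {a : ℝ} (ha : 0 < a)
    {β : ι → ℝ} (hβ : ∀ i, 0 ≤ β i) :
    Tendsto (fun P : ℝ => Real.log (a * ∏ i, (1 + (P - 1) * β i)) / Real.log P) atTop
      (nhds (Fintype.card {i // β i ≠ 0})) := by
  have hterm : ∀ i, Tendsto (fun P : ℝ => Real.log (1 + (P - 1) * β i) / Real.log P) atTop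
      (nhds (if β i ≠ 0 then 1 else 0)) := by
    intro i
    by_cases hi : β i = 0
    · simp [hi]
    · simpa [hi] using tendsto_log_one_add_sub_one_mul_div_log ((hβ i).lt_of_ne' hi)
  have := ((tendsto_const_nhds (x := Real.log a)).div_atTop Real.tendsto_log_atTop).add
    (tendsto_finsetSum Finset.univ fun i _ => hterm i)
  rw [zero_add, Finset.sum_boole, ← Fintype.card_subtype] at this
  refine this.congr' ?_
  filter_upwards [eventually_gt_atTop 1] with P hP
  have hfac : ∀ i ∈ Finset.univ, 1 + (P - 1) * β i ≠ 0 := fun i _ => by nlinarith [hβ i]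
  rw [Real.log_mul ha.ne' (Finset.prod_ne_zero_iff.2 hfac), Real.log_prod hfac, add_div,
    Finset.sum_div]

theorem Submodule.finrank_prod {K M N : Type*} [Field K] [AddCommGroup M] [AddCommGroup N]
    [Module K M] [Module K N] [FiniteDimensional K M] [FiniteDimensional K N]
    (p : Submodule K M) (q : Submodule K N) :
    Module.finrank K (p.prod q) = Module.finrank K p + Module.finrank K q := by
  let e : p.prod q ≃ₗ[K] p × q :=
    { toFun x := (⟨x.1.1, x.2.1⟩, ⟨x.1.2, x.2.2⟩)
      invFun y := ⟨(y.1.1, y.2.1), ⟨y.1.2, y.2.2⟩⟩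
      map_add' _ _ := rfl
      map_smul' _ _ := rfl }
  rw [e.finrank_eq, Module.finrank_prod]

namespace Matrix

section Rank

variable {K : Type*} [Field K] {m m' n n' : Type*} [Fintype m] [Fintype m'] [Fintype n]
  [Fintype n']

theorem rank_fromBlocks_zero_zero (A : Matrix m n K) (D : Matrix m' n' K) :
    (fromBlocks A 0 0 D).rank = A.rank + D.rank := by
  let eₘ := LinearEquiv.sumArrowLequivProdArrow m m' K K
  let eₙ := LinearEquiv.sumArrowLequivProdArrow n n' K K
  have hlin : (fromBlocks A 0 0 D).mulVecLin =
      eₘ.symm.toLinearMap ∘ₗ A.mulVecLin.prodMap D.mulVecLin ∘ₗ eₙ.toLinearMap := by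
    ext v i
    cases i <;> simp [eₘ, eₙ, fromBlocks_mulVec, LinearEquiv.sumArrowLequivProdArrow,
      Equiv.sumArrowEquivProdArrow]
  rw [rank, hlin, LinearMap.range_comp, LinearEquiv.finrank_map_eq,
    LinearMap.range_comp_of_range_eq_top _ (LinearEquiv.range _), LinearMap.range_prodMap,
    Submodule.finrank_prod, rank, rank]

theorem rank_fromBlocks_zero₂₁_of_isUnit [DecidableEq m] [DecidableEq n'] {A : Matrix m m K}
    (hA : IsUnit A) (B : Matrix m n' K) (D : Matrix m' n' K) :
    (fromBlocks A B 0 D).rank = Fintype.card m + D.rank := by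
  set F : Matrix (m ⊕ n') (m ⊕ n') K := fromBlocks 1 (-(A⁻¹ * B)) 0 1
  have hF : IsUnit F.det := by simp [F]
  have hAB : fromBlocks A B 0 D * F = fromBlocks A 0 0 D := by
    simp [F, fromBlocks_multiply, ← Matrix.mul_assoc,
      mul_nonsing_inv _ ((isUnit_iff_isUnit_det A).1 hA)]
  rw [← rank_mul_eq_left_of_isUnit_det F _ hF, hAB, rank_fromBlocks_zero_zero,
    rank_of_isUnit A hA]

theorem rank_mul_eq_right_of_mul_eq_one [DecidableEq n] {L : Matrix n m K} {M : Matrix m n K}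
    (h : L * M = 1) (A : Matrix n n' K) : (M * A).rank = A.rank := by
  refine le_antisymm (rank_mul_le_right _ _) ?_
  calc A.rank = (L * (M * A)).rank := by rw [← Matrix.mul_assoc, h, Matrix.one_mul]
    _ ≤ (M * A).rank := rank_mul_le_right _ _

end Rank

variable {𝕜 : Type*} [RCLike 𝕜] {m n : Type*}

theorem PosDef.add_smul_of_one_le {E K : Matrix n n 𝕜} (hEK : (E + K).PosDef)
    (hK : K.PosSemidef) {P : ℝ} (hP : 1 ≤ P) : (E + (P : 𝕜) • K).PosDef := by
  have h : E + (P : 𝕜) • K = E + K + (P - 1) • K := by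
    rw [sub_smul, one_smul, RCLike.real_smul_eq_coe_smul (K := 𝕜)]
    abel
  rw [h]
  exact hEK.add_posSemidef (hK.smul (sub_nonneg.2 hP))

variable [Fintype m] [Fintype n]

theorem PosSemidef.posDef_fromBlocks_add {A : Matrix m m 𝕜} {B : Matrix m n 𝕜}
    {C : Matrix n m 𝕜} {D E : Matrix n n 𝕜} (h : (fromBlocks A B C D).PosSemidef)
    (hA : A.PosDef) (hE : E.PosDef) : (fromBlocks A B C (E + D)).PosDef := by
  have hsplit : fromBlocks A B C (E + D) = fromBlocks 0 0 0 E + fromBlocks A B C D := by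
    simp [fromBlocks_add]
  have hE' : (fromBlocks 0 0 0 E : Matrix (m ⊕ n) (m ⊕ n) 𝕜).IsHermitian :=
    isHermitian_zero.fromBlocks (by simp) hE.isHermitian
  rw [hsplit]
  refine .of_dotProduct_mulVec_pos (hE'.add h.isHermitian) fun x hx => ?_
  obtain ⟨u, v, rfl⟩ : ∃ u v, x = Sum.elim u v := ⟨_, _, (Sum.elim_comp_inl_inr x).symm⟩
  rw [add_mulVec, dotProduct_add]
  by_cases hv : v = 0
  · subst hv
    have hu : u ≠ 0 := by rintro rfl; exact hx Sum.elim_zero_zero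
    simpa [fromBlocks_mulVec, Function.star_sumElim] using hA.dotProduct_mulVec_pos hu
  · have hq : star (Sum.elim u v) ⬝ᵥ (fromBlocks 0 0 0 E *ᵥ Sum.elim u v) =
        star v ⬝ᵥ (E *ᵥ v) := by
      simp [fromBlocks_mulVec, Function.star_sumElim]
    rw [hq]
    exact add_pos_of_pos_of_nonneg (hE.dotProduct_mulVec_pos hv) (h.dotProduct_mulVec_nonneg _)

variable [DecidableEq n]

theorem PosDef.re_det_pos {N : Matrix n n 𝕜} (hN : N.PosDef) : 0 < RCLike.re N.det :=
  (RCLike.pos_iff.1 hN.det_pos).1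

open scoped MatrixOrder in
theorem PosSemidef.exists_eq_mul_conjTranspose {A : Matrix n n 𝕜} (hA : A.PosSemidef) :
    ∃ B : Matrix n n 𝕜, A = B * Bᴴ :=
  ⟨CFC.sqrt A, by
    rw [(CFC.sqrt_nonneg A).posSemidef.isHermitian.eq, CFC.sqrt_mul_sqrt_self A hA.nonneg]⟩

open scoped MatrixOrder in
theorem PosDef.exists_isUnit_eq_mul_conjTranspose {A : Matrix n n 𝕜} (hA : A.PosDef) :
    ∃ B : Matrix n n 𝕜, IsUnit B ∧ A = B * Bᴴ :=
  ⟨CFC.sqrt A, (CFC.isUnit_sqrt_iff A hA.posSemidef.nonneg).2 hA.isUnit, by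
    rw [(CFC.sqrt_nonneg A).posSemidef.isHermitian.eq,
      CFC.sqrt_mul_sqrt_self A hA.posSemidef.nonneg]⟩

theorem IsHermitian.det_one_add_smul {B : Matrix n n 𝕜} (hB : B.IsHermitian) (t : ℝ) :
    (1 + (t : 𝕜) • B).det = ∏ i, ((1 + t * hB.eigenvalues i : ℝ) : 𝕜) := by
  have hcfc : (1 : Matrix n n 𝕜) + (t : 𝕜) • B = cfc (fun x : ℝ => 1 + t * x) B := by
    rw [cfc_add .., cfc_const_one .., cfc_const_mul .., cfc_id' ..]
    simp
  rw [hcfc, hB.cfc_eq]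
  simp [IsHermitian.cfc, -Unitary.conjStarAlgAut_apply, det_diagonal]

theorem PosDef.exists_re_det_add_smul_eq_prod {N K : Matrix n n 𝕜} (hN : N.PosDef)
    (hK : K.PosSemidef) :
    ∃ β : n → ℝ, (∀ i, 0 ≤ β i) ∧ Fintype.card {i // β i ≠ 0} = K.rank ∧
      ∀ t : ℝ, RCLike.re (N + (t : 𝕜) • K).det = RCLike.re N.det * ∏ i, (1 + t * β i) := by
  obtain ⟨Q, hQ, rfl⟩ := hN.exists_isUnit_eq_mul_conjTranspose
  have hQ' : IsUnit Q.det := (isUnit_iff_isUnit_det Q).1 hQ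
  set B := Q⁻¹ * K * (Q⁻¹)ᴴ
  have hB : B.PosSemidef := hK.mul_mul_conjTranspose_same Q⁻¹
  have hQBQ : ∀ t : ℝ, Q * Qᴴ + (t : 𝕜) • K = Q * (1 + (t : 𝕜) • B) * Qᴴ := by
    intro t
    rw [Matrix.mul_add, Matrix.add_mul, Matrix.mul_one, Matrix.mul_smul, Matrix.smul_mul]
    simp only [B, ← Matrix.mul_assoc, mul_nonsing_inv _ hQ', Matrix.one_mul]
    rw [Matrix.mul_assoc, ← conjTranspose_mul, mul_nonsing_inv _ hQ', conjTranspose_one,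
      Matrix.mul_one]
  refine ⟨hB.1.eigenvalues, hB.eigenvalues_nonneg, ?_, fun t => ?_⟩
  · have hQi : IsUnit Q⁻¹.det := isUnit_nonsing_inv_det Q hQ'
    rw [← hB.1.rank_eq_card_non_zero_eigs,
      rank_mul_eq_left_of_isUnit_det _ _ (by rwa [det_conjTranspose, isUnit_star]),
      rank_mul_eq_right_of_isUnit_det _ _ hQi]
  · rw [hQBQ, det_mul, det_mul, hB.1.det_one_add_smul, mul_right_comm, ← det_mul,
      ← RCLike.ofReal_prod, RCLike.re_mul_ofReal]

theorem tendsto_log_re_det_add_smul_div_log {E K : Matrix n n 𝕜} (hK : K.PosSemidef)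
    (hEK : (E + K).PosDef) :
    Tendsto (fun P : ℝ => Real.log (RCLike.re (E + (P : 𝕜) • K).det) / Real.log P) atTop
      (nhds K.rank) := by
  obtain ⟨β, hβ, hcard, hdet⟩ := hEK.exists_re_det_add_smul_eq_prod hK
  rw [← hcard]
  refine (tendsto_log_mul_prod_div_log hEK.re_det_pos hβ).congr fun P => ?_
  rw [← hdet, RCLike.ofReal_sub, RCLike.ofReal_one, sub_smul, one_smul, add_add_sub_cancel]

end Matrix

def IsGenericChannel {r : ℕ} {t : Type*} [Fintype t] (G : Matrix (Fin r) t ℂ) : Prop :=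
  ∀ A : Matrix t t ℂ, A.PosSemidef → (G * A * Gᴴ).rank = min r A.rank

theorem IsGenericChannel.rank_mul {r : ℕ} {t k : Type*} [Fintype t] [Fintype k]
    {G : Matrix (Fin r) t ℂ} (hG : IsGenericChannel G) (F : Matrix t k ℂ) :
    (G * F).rank = min r F.rank := by
  rw [← rank_self_mul_conjTranspose, conjTranspose_mul, ← Matrix.mul_assoc,
    Matrix.mul_assoc G, hG _ (posSemidef_self_mul_conjTranspose F), rank_self_mul_conjTranspose]

theorem IsGenericChannel.rank_add_mul_mul_conjTranspose {r tx ts : ℕ}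
    {H1 : Matrix (Fin r) (Fin tx) ℂ} {H2 : Matrix (Fin r) (Fin ts) ℂ}
    (hG : IsGenericChannel (fromCols H1 H2))
    {SX : Matrix (Fin tx) (Fin tx) ℂ} {SS : Matrix (Fin ts) (Fin ts) ℂ}
    (hSX : SX.PosDef) (hSS : SS.PosSemidef) :
    (H1 * SX * H1ᴴ + H2 * SS * H2ᴴ).rank = min r (tx + SS.rank) := by
  obtain ⟨X, hX, rfl⟩ := hSX.exists_isUnit_eq_mul_conjTranspose
  obtain ⟨Y, rfl⟩ := hSS.exists_eq_mul_conjTranspose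
  have : H1 * (X * Xᴴ) * H1ᴴ + H2 * (Y * Yᴴ) * H2ᴴ =
      fromCols H1 H2 * fromBlocks X 0 0 Y * (fromCols H1 H2 * fromBlocks X 0 0 Y)ᴴ := by
    simp [conjTranspose_fromCols_eq_fromRows_conjTranspose, fromCols_mul_fromBlocks,
      fromCols_mul_fromRows, Matrix.mul_assoc]
  rw [this, rank_self_mul_conjTranspose, hG.rank_mul, rank_fromBlocks_zero_zero,
    rank_of_isUnit X hX, rank_self_mul_conjTranspose, Fintype.card_fin]

section DPC

variable {r tx ts : ℕ} (H1 : Matrix (Fin r) (Fin tx) ℂ) (H2 : Matrix (Fin r) (Fin ts) ℂ)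
  (W : Matrix (Fin tx) (Fin ts) ℂ)

theorem dpcM_smul (p : ℂ) (SX : Matrix (Fin tx) (Fin tx) ℂ) (SS : Matrix (Fin ts) (Fin ts) ℂ)
    (SZ : Matrix (Fin r) (Fin r) ℂ) :
    dpcM H1 H2 W (p • SX) (p • SS) SZ = fromBlocks 0 0 0 SZ + p • dpcM H1 H2 W SX SS 0 := by
  simp [dpcM, fromBlocks_smul, fromBlocks_add, smul_add, Matrix.mul_smul, Matrix.smul_mul,
    add_assoc]

theorem dpcM_mul_conjTranspose (X : Matrix (Fin tx) (Fin tx) ℂ)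
    (Y : Matrix (Fin ts) (Fin ts) ℂ) :
    dpcM H1 H2 W (X * Xᴴ) (Y * Yᴴ) 0 =
      fromBlocks X (W * Y) (H1 * X) (H2 * Y) * (fromBlocks X (W * Y) (H1 * X) (H2 * Y))ᴴ := by
  simp [dpcM, fromBlocks_conjTranspose, fromBlocks_multiply, Matrix.mul_assoc]

theorem posSemidef_dpcM_zero {SX : Matrix (Fin tx) (Fin tx) ℂ}
    {SS : Matrix (Fin ts) (Fin ts) ℂ} (hSX : SX.PosSemidef) (hSS : SS.PosSemidef) :
    (dpcM H1 H2 W SX SS 0).PosSemidef := by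
  obtain ⟨X, rfl⟩ := hSX.exists_eq_mul_conjTranspose
  obtain ⟨Y, rfl⟩ := hSS.exists_eq_mul_conjTranspose
  rw [dpcM_mul_conjTranspose]
  exact posSemidef_self_mul_conjTranspose _

theorem posDef_fromBlocks_add_dpcM_zero {SX : Matrix (Fin tx) (Fin tx) ℂ}
    {SS : Matrix (Fin ts) (Fin ts) ℂ} {SZ : Matrix (Fin r) (Fin r) ℂ} (hSX : SX.PosDef)
    (hSS : SS.PosSemidef) (hSZ : SZ.PosDef) :
    (fromBlocks 0 0 0 SZ + dpcM H1 H2 W SX SS 0).PosDef := by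
  have := (posSemidef_dpcM_zero H1 H2 W hSX.posSemidef hSS).posDef_fromBlocks_add
    (hSX.add_posSemidef (hSS.mul_mul_conjTranspose_same W)) hSZ
  simpa [dpcM, fromBlocks_add, add_assoc] using this

theorem rank_dpcM_zero (hG : IsGenericChannel (fromCols H1 H2))
    {SX : Matrix (Fin tx) (Fin tx) ℂ} {SS : Matrix (Fin ts) (Fin ts) ℂ}
    (hSX : SX.PosDef) (hSS : SS.PosSemidef) :
    (dpcM H1 H2 W SX SS 0).rank = tx + min r SS.rank := by
  obtain ⟨X, hX, rfl⟩ := hSX.exists_isUnit_eq_mul_conjTranspose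
  obtain ⟨Y, rfl⟩ := hSS.exists_eq_mul_conjTranspose
  set E : Matrix (Fin tx ⊕ Fin r) (Fin tx ⊕ Fin r) ℂ := fromBlocks 1 0 (-H1) 1
  set V : Matrix (Fin tx ⊕ Fin ts) (Fin ts) ℂ := fromRows (-W) 1
  have hE : IsUnit E.det := by simp [E]
  -- `H2 - H1 * W = [H1 H2] * V` is the effective channel of the interference after the row
  -- operation `E`; `V` has a left inverse, so only `rank Y` survives.
  have hEF : E * fromBlocks X (W * Y) (H1 * X) (H2 * Y) =
      fromBlocks X (W * Y) 0 (fromCols H1 H2 * (V * Y)) := by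
    simp [E, V, fromBlocks_multiply, fromCols_mul_fromRows, ← Matrix.mul_assoc]
  have hleft :
      fromCols (0 : Matrix (Fin ts) (Fin tx) ℂ) (1 : Matrix (Fin ts) (Fin ts) ℂ) * V = 1 := by
    simp [V, fromCols_mul_fromRows]
  rw [dpcM_mul_conjTranspose, rank_self_mul_conjTranspose, rank_self_mul_conjTranspose,
    ← rank_mul_eq_right_of_isUnit_det E _ hE, hEF, rank_fromBlocks_zero₂₁_of_isUnit hX,
    hG.rank_mul, rank_mul_eq_right_of_mul_eq_one hleft, Fintype.card_fin]

end DPC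

section Rate

variable {r tx ts : ℕ} {W : Matrix (Fin tx) (Fin ts) ℂ} {SXb : Matrix (Fin tx) (Fin tx) ℂ}
  {SSb : Matrix (Fin ts) (Fin ts) ℂ} {SZ : Matrix (Fin r) (Fin r) ℂ} {c : ℝ}

theorem dpcRate_eq_log_det
    (H : Matrix (Fin r) (Fin tx) ℂ × Matrix (Fin r) (Fin ts) ℂ) (hSXb : SXb.PosDef)
    (hSZ : SZ.PosDef) (hSSb : SSb.PosSemidef) (hc : 0 ≤ c) {P : ℝ}
    (hP : 1 ≤ P) :
    dpcRate W SXb SSb SZ c P H =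
      Real.log ((P : ℂ) • SXb).det.re
        + Real.log (SZ + (P : ℂ) • (H.1 * SXb * H.1ᴴ + H.2 * ((c : ℂ) • SSb) * H.2ᴴ)).det.re
        - Real.log (fromBlocks 0 0 0 SZ
            + (P : ℂ) • dpcM H.1 H.2 W SXb ((c : ℂ) • SSb) 0).det.re := by
  have hcS : ((c : ℂ) • SSb).PosSemidef := hSSb.smul (by exact_mod_cast hc)
  have hcP : (((c * P : ℝ)) : ℂ) • SSb = (P : ℂ) • ((c : ℂ) • SSb) := by
    rw [smul_smul, Complex.ofReal_mul, mul_comm]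
  have hrecv : SZ + H.1 * ((P : ℂ) • SXb) * H.1ᴴ + H.2 * ((P : ℂ) • ((c : ℂ) • SSb)) * H.2ᴴ =
      SZ + (P : ℂ) • (H.1 * SXb * H.1ᴴ + H.2 * ((c : ℂ) • SSb) * H.2ᴴ) := by
    simp only [Matrix.mul_smul, Matrix.smul_mul, smul_add, add_assoc]
  have hX : 0 < ((P : ℂ) • SXb).det.re :=
    (hSXb.smul (show (0 : ℂ) < P by exact_mod_cast zero_lt_one.trans_le hP)).re_det_pos
  have hG : 0 < (SZ + (P : ℂ) • (H.1 * SXb * H.1ᴴ + H.2 * ((c : ℂ) • SSb) * H.2ᴴ)).det.re := by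
    have hGram := (hSXb.posSemidef.mul_mul_conjTranspose_same H.1).add
      (hcS.mul_mul_conjTranspose_same H.2)
    exact (PosDef.add_smul_of_one_le (hSZ.add_posSemidef hGram) hGram hP).re_det_pos
  have hM : 0 < (fromBlocks 0 0 0 SZ
      + (P : ℂ) • dpcM H.1 H.2 W SXb ((c : ℂ) • SSb) 0).det.re :=
    ((posDef_fromBlocks_add_dpcM_zero H.1 H.2 W hSXb hcS hSZ).add_smul_of_one_le
      (posSemidef_dpcM_zero H.1 H.2 W hSXb.posSemidef hcS) hP).re_det_pos
  rw [dpcRate, hcP, hrecv, dpcM_smul, Real.log_div (mul_pos hX hG).ne' hM.ne',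
    Real.log_mul hX.ne' hG.ne']

theorem tendsto_dpcRate_div_log
    {H : Matrix (Fin r) (Fin tx) ℂ × Matrix (Fin r) (Fin ts) ℂ}
    (hH : IsGenericChannel (fromCols H.1 H.2)) (hSXb : SXb.PosDef) (hSZ : SZ.PosDef)
    (hSSb : SSb.PosSemidef) (hc : 0 < c) :
    Tendsto (fun P : ℝ => dpcRate W SXb SSb SZ c P H / Real.log P) atTop
      (nhds ((min r (tx + SSb.rank) : ℝ) - (min r SSb.rank : ℝ))) := by
  have hcS : ((c : ℂ) • SSb).PosSemidef := hSSb.smul (by exact_mod_cast hc.le)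
  have hcSrank : ((c : ℂ) • SSb).rank = SSb.rank := rank_smul_of_mem_nonZeroDivisors _
    (mem_nonZeroDivisors_of_ne_zero (by exact_mod_cast hc.ne'))
  have hGram := (hSXb.posSemidef.mul_mul_conjTranspose_same H.1).add
    (hcS.mul_mul_conjTranspose_same H.2)
  have hX := tendsto_log_re_det_add_smul_div_log (E := 0) hSXb.posSemidef (by rwa [zero_add])
  have hY := tendsto_log_re_det_add_smul_div_log hGram (hSZ.add_posSemidef hGram)
  have hZ := tendsto_log_re_det_add_smul_div_log
    (posSemidef_dpcM_zero H.1 H.2 W hSXb.posSemidef hcS)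
    (posDef_fromBlocks_add_dpcM_zero H.1 H.2 W hSXb hcS hSZ)
  rw [rank_of_isUnit _ hSXb.isUnit, Fintype.card_fin] at hX
  simp only [zero_add] at hX
  rw [hH.rank_add_mul_mul_conjTranspose hSXb hcS, hcSrank] at hY
  rw [rank_dpcM_zero _ _ _ hH hSXb hcS, hcSrank] at hZ
  have hlim := (hX.add hY).sub hZ
  rw [show ((tx : ℕ) : ℝ) + ((min r (tx + SSb.rank) : ℕ) : ℝ)
      - ((tx + min r SSb.rank : ℕ) : ℝ) = (min r (tx + SSb.rank) : ℝ) - (min r SSb.rank : ℝ) by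
    push_cast; ring] at hlim
  refine hlim.congr' ?_
  filter_upwards [eventually_ge_atTop 1] with P hP
  rw [dpcRate_eq_log_det H hSXb hSZ hSSb hc.le hP, sub_div, add_div]
  -- `RCLike.re` on `ℂ` unfolds to `Complex.re`
  rfl

end Rate

/-- Theorem 1, expectation form: if `μ`-almost every channel pair
`(H1, H2)` is generic, then for every fixed inflation factor `W`, under the stated
integrability and domination hypotheses, the ergodic DPC rate satisfies
`(∫ f_P dμ) / log P → min(r, t_x + rank Σ̄S) − min(r, rank Σ̄S)` as `P → ∞`;
in particular the limit is the same for every such `W` and equals the value at `W = 0`. -/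
theorem ergodic_dpc_scaling_factor {r tx ts : ℕ}
    (μ : Measure (Matrix (Fin r) (Fin tx) ℂ × Matrix (Fin r) (Fin ts) ℂ))
    [IsProbabilityMeasure μ]
    (hgen : ∀ᵐ H ∂μ, ∀ A : Matrix (Fin tx ⊕ Fin ts) (Fin tx ⊕ Fin ts) ℂ,
      A.PosSemidef →
      (fromCols H.1 H.2 * A * (fromCols H.1 H.2)ᴴ).rank = min r A.rank)
    (SXb : Matrix (Fin tx) (Fin tx) ℂ) (SZ : Matrix (Fin r) (Fin r) ℂ)
    (SSb : Matrix (Fin ts) (Fin ts) ℂ)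
    (hSXb : SXb.PosDef) (hSZ : SZ.PosDef) (hSSb : SSb.PosSemidef)
    (c : ℝ) (hc : 0 < c)
    (W : Matrix (Fin tx) (Fin ts) ℂ)
    (hint : ∀ P : ℝ, 2 ≤ P → Integrable (dpcRate W SXb SSb SZ c P) μ)
    (g : Matrix (Fin r) (Fin tx) ℂ × Matrix (Fin r) (Fin ts) ℂ → ℝ)
    (hg : Integrable g μ)
    (hdom : ∀ P : ℝ, 2 ≤ P →
      ∀ᵐ H ∂μ, |dpcRate W SXb SSb SZ c P H| / Real.log P ≤ g H) :
    Tendsto (fun P : ℝ => (∫ H, dpcRate W SXb SSb SZ c P H ∂μ) / Real.log P)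
      atTop
      (nhds ((min r (tx + SSb.rank) : ℝ) - (min r SSb.rank : ℝ))) := by
  have hpointwise : ∀ᵐ H ∂μ, Tendsto (fun P : ℝ => dpcRate W SXb SSb SZ c P H / Real.log P)
      atTop (nhds ((min r (tx + SSb.rank) : ℝ) - (min r SSb.rank : ℝ))) := by
    filter_upwards [hgen] with H hH using tendsto_dpcRate_div_log hH hSXb hSZ hSSb hc
  have hmeas : ∀ᶠ P : ℝ in atTop,
      AEStronglyMeasurable (fun H => dpcRate W SXb SSb SZ c P H / Real.log P) μ := by
    filter_upwards [eventually_ge_atTop 2] with P hP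
    exact ((hint P hP).div_const _).aestronglyMeasurable
  have hbound : ∀ᶠ P : ℝ in atTop,
      ∀ᵐ H ∂μ, ‖dpcRate W SXb SSb SZ c P H / Real.log P‖ ≤ g H := by
    filter_upwards [eventually_ge_atTop 2] with P hP
    filter_upwards [hdom P hP] with H hH
    rwa [norm_div, Real.norm_eq_abs, Real.norm_of_nonneg (Real.log_nonneg (by linarith))]
  simpa [integral_div] using
    tendsto_integral_filter_of_dominated_convergence g hmeas hbound hg hpointwise
end

section
/- (Theorem 2, per-realization form.) Let H11 ∈ ℂ^{r1×t1}, H21 ∈ ℂ^{r1×t2}, H12 ∈ ℂ^{r2×t1}, H22 ∈ ℂ^{r2×t2}, and write H̄1 = [H11 H21] and H̄2 = [H12 H22]. Assume the genericity conditions: for every (t1+t2)×(t1+t2) Hermitian positive semidefinite matrix A, rank(H̄1 A H̄1*) = min(r1, rank A) and rank(H̄2 A H̄2*) = min(r2, rank A). Then for all integers s, k with 0 < s ≤ t1+t2 and 0 ≤ k ≤ min(t2, s), there exist matrices T1 ∈ ℂ^{(t1+t2)×(t1+t2)} and T2 ∈ ℂ^{t2×t2} with rank(T1 T1* + diag(0_{t1},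 T2 T2*)) = s and rank(T2 T2*) = k, and for each power level P ≥ 1 an inflation factor W(P) ∈ ℂ^{t2×(t1+t2)}, such that the sum rate R_sum(P), obtained from the sum-rate expression by replacing T1, T2 with √P·T1, √P·T2 and W with W(P), satisfies: R_sum(P)/log P tends, as P → ∞, to [min(r1, s) − min(r1, k)] + [min(r2, s) − min(r2, s − k)]. Consequently the high-SNR sum-rate scaling factor γ_sum = max over such (s,k) of this quantity is achievable over the no-CSIT cognitive radio channel. -/
/-!
Take the inflation factor `W = 0` and let `T1`, `T2` be coordinate projections onto disjoint sets
of transmit coordinates, `S` of size `s - k` and a set `K` of `k` cognitive coordinates. With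
`W = 0` the Schur complement of `D2` with respect to its identity block cancels the cognitive term
`H22 T2 T2* H22*`, so all four determinants in the sum rate take the form
`det (I + P • G A Gᴴ)` with `A` positive semidefinite. Such a determinant is
`∏ (1 + P λᵢ)` over the eigenvalues of `G A Gᴴ`, hence its logarithm is
`rank (G A Gᴴ) · log P + O(1)`, and the genericity conditions turn these ranks into
`min (r, rank A)` with `rank A ∈ {s, k, s - k}`.
-/

open Matrix Filter
open scoped ComplexOrder

/-- The per-realization sum rate of the cognitive radio channel:
`R_sum = log( det(I + H̄1 T1 T1* H̄1* + H21 T2 T2* H21*) / det(I + H21 T2 T2* H21*) )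
       + log( det(I + H22 T2 T2* H22* + H̄2 T1 T1* H̄2*) / det D2 )`,
where `H̄1 = [H11 H21]`, `H̄2 = [H12 H22]` and
`D2 = [[I + W T1 T1* W*, T2* H22* + W T1 T1* H̄2*],
       [H22 T2 + H̄2 T1 T1* W*, I + H22 T2 T2* H22* + H̄2 T1 T1* H̄2*]]`. -/
noncomputable def crcSumRate {r1 r2 t1 t2 : ℕ}
    (H11 : Matrix (Fin r1) (Fin t1) ℂ) (H21 : Matrix (Fin r1) (Fin t2) ℂ)
    (H12 : Matrix (Fin r2) (Fin t1) ℂ) (H22 : Matrix (Fin r2) (Fin t2) ℂ)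
    (T1 : Matrix (Fin t1 ⊕ Fin t2) (Fin t1 ⊕ Fin t2) ℂ)
    (T2 : Matrix (Fin t2) (Fin t2) ℂ)
    (W : Matrix (Fin t2) (Fin t1 ⊕ Fin t2) ℂ) : ℝ :=
  Real.log ((1 + fromCols H11 H21 * (T1 * T1ᴴ) * (fromCols H11 H21)ᴴ
        + H21 * (T2 * T2ᴴ) * H21ᴴ).det.re
      / (1 + H21 * (T2 * T2ᴴ) * H21ᴴ).det.re)
  + Real.log ((1 + H22 * (T2 * T2ᴴ) * H22ᴴ
        + fromCols H12 H22 * (T1 * T1ᴴ) * (fromCols H12 H22)ᴴ).det.re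
      / (fromBlocks
          (1 + W * (T1 * T1ᴴ) * Wᴴ)
          (T2ᴴ * H22ᴴ + W * (T1 * T1ᴴ) * (fromCols H12 H22)ᴴ)
          (H22 * T2 + fromCols H12 H22 * (T1 * T1ᴴ) * Wᴴ)
          (1 + H22 * (T2 * T2ᴴ) * H22ᴴ
            + fromCols H12 H22 * (T1 * T1ᴴ) * (fromCols H12 H22)ᴴ)).det.re)

lemma tendsto_log_one_add_mul_div_log {c : ℝ} (hc : 0 < c) :
    Tendsto (fun P : ℝ => Real.log (1 + P * c) / Real.log P) atTop (nhds 1) := by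
  -- `log (1 + P c) = log P + log (c + P⁻¹)`, and the second summand stays bounded.
  have hbounded : Tendsto (fun P : ℝ => Real.log (c + P⁻¹)) atTop (nhds (Real.log c)) := by
    have := (tendsto_const_nhds (x := c)).add tendsto_inv_atTop_zero
    rw [add_zero] at this
    exact ((Real.continuousAt_log hc.ne').tendsto).comp this
  have hlim := (tendsto_const_nhds (x := (1 : ℝ))).add
    (hbounded.mul Real.tendsto_log_atTop.inv_tendsto_atTop)
  rw [mul_zero, add_zero] at hlim
  refine hlim.congr' ?_
  filter_upwards [eventually_gt_atTop 1] with P hP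
  have hsplit : 1 + P * c = P * (c + P⁻¹) := by field_simp; ring
  rw [hsplit, Real.log_mul (by linarith) (by positivity), add_div,
    div_self (Real.log_pos hP).ne', div_eq_mul_inv]
  rfl

section Spectral

variable {𝕜 n : Type*} [RCLike 𝕜] [Fintype n]

lemma Matrix.IsHermitian.det_one_add_smul_s11 [DecidableEq n] {M : Matrix n n 𝕜} (hM : M.IsHermitian)
    (P : ℝ) :
    (1 + (P : 𝕜) • M).det = ((∏ i, (1 + P * hM.eigenvalues i) : ℝ) : 𝕜) := by
  set U : Matrix n n 𝕜 := (hM.eigenvectorUnitary : Matrix n n 𝕜)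
  have hU : U * star U = 1 := Matrix.mem_unitaryGroup_iff.mp hM.eigenvectorUnitary.2
  have hdiag : 1 + (P : 𝕜) • M
      = U * diagonal (fun i => ((1 + P * hM.eigenvalues i : ℝ) : 𝕜)) * star U := by
    conv_lhs => rw [hM.spectral_theorem, Unitary.conjStarAlgAut_apply]
    have hshift : diagonal (fun i => ((1 + P * hM.eigenvalues i : ℝ) : 𝕜))
        = 1 + (P : 𝕜) • diagonal (RCLike.ofReal ∘ hM.eigenvalues) := by
      ext i j
      by_cases h : i = j <;> simp [diagonal, h]
    rw [hshift, mul_add, add_mul, Matrix.mul_one, hU, mul_smul_comm, smul_mul_assoc]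
  rw [hdiag, det_mul_right_comm, hU, one_mul, det_diagonal, RCLike.ofReal_prod]

lemma Matrix.PosSemidef.re_det_one_add_smul_pos [DecidableEq n] {M : Matrix n n 𝕜}
    (hM : M.PosSemidef) {P : ℝ} (hP : 0 ≤ P) : 0 < RCLike.re (1 + (P : 𝕜) • M).det := by
  rw [hM.isHermitian.det_one_add_smul_s11, RCLike.ofReal_re]
  exact Finset.prod_pos fun i _ => by have := hM.eigenvalues_nonneg i; positivity

lemma Matrix.PosSemidef.tendsto_log_det_one_add_smul_div_log [DecidableEq n] {M : Matrix n n 𝕜}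
    (hM : M.PosSemidef) :
    Tendsto (fun P : ℝ => Real.log (RCLike.re (1 + (P : 𝕜) • M).det) / Real.log P) atTop
      (nhds (M.rank : ℝ)) := by
  have hrank : (M.rank : ℝ) = ∑ i, if hM.isHermitian.eigenvalues i = 0 then 0 else 1 := by
    rw [hM.isHermitian.rank_eq_card_non_zero_eigs, Fintype.card_subtype, Finset.sum_ite,
      Finset.sum_const_zero, zero_add, Finset.sum_const, nsmul_one]
  have hterm (i : n) : Tendsto
      (fun P : ℝ => Real.log (1 + P * hM.isHermitian.eigenvalues i) / Real.log P) atTop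
      (nhds (if hM.isHermitian.eigenvalues i = 0 then 0 else 1)) := by
    split_ifs with h
    · simp [h]
    · exact tendsto_log_one_add_mul_div_log ((hM.eigenvalues_nonneg i).lt_of_ne' h)
  rw [hrank]
  refine (tendsto_finsetSum _ fun i _ => hterm i).congr' ?_
  filter_upwards [eventually_ge_atTop 0] with P hP
  rw [hM.isHermitian.det_one_add_smul_s11, RCLike.ofReal_re, Real.log_prod, Finset.sum_div]
  intro i _
  have := hM.eigenvalues_nonneg i
  positivity

lemma tendsto_log_det_div_det_div_log {m : Type*} [Fintype m] [DecidableEq m]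
    (G : Matrix m n 𝕜) {X Y : Matrix n n 𝕜} (hX : X.PosSemidef) (hY : Y.PosSemidef) :
    Tendsto (fun P : ℝ => Real.log (RCLike.re (1 + G * ((P : 𝕜) • X) * Gᴴ).det
        / RCLike.re (1 + G * ((P : 𝕜) • Y) * Gᴴ).det) / Real.log P) atTop
      (nhds ((G * X * Gᴴ).rank - (G * Y * Gᴴ).rank : ℝ)) := by
  have hGX := hX.mul_mul_conjTranspose_same G
  have hGY := hY.mul_mul_conjTranspose_same G
  refine (hGX.tendsto_log_det_one_add_smul_div_log.sub
    hGY.tendsto_log_det_one_add_smul_div_log).congr' ?_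
  filter_upwards [eventually_ge_atTop 0] with P hP
  simp only [Matrix.mul_smul, Matrix.smul_mul]
  rw [Real.log_div (hGX.re_det_one_add_smul_pos hP).ne' (hGY.re_det_one_add_smul_pos hP).ne',
    sub_div]

end Spectral

lemma sqrt_smul_mul_conjTranspose_sqrt_smul {n : Type*} [Fintype n] (T : Matrix n n ℂ) {P : ℝ}
    (hP : 0 ≤ P) :
    ((√P : ℂ) • T) * ((√P : ℂ) • T)ᴴ = (P : ℂ) • (T * Tᴴ) := by
  rw [conjTranspose_smul, Matrix.smul_mul, Matrix.mul_smul, smul_smul, Complex.star_def,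
    Complex.conj_ofReal, ← Complex.ofReal_mul, Real.mul_self_sqrt hP]

section CoordProj

variable {𝕜 ι : Type*} [RCLike 𝕜] [DecidableEq ι]

def coordProj (S : Finset ι) : Matrix ι ι 𝕜 := diagonal fun j => if j ∈ S then 1 else 0

lemma coordProj_mul_conjTranspose_self [Fintype ι] (S : Finset ι) :
    coordProj S * (coordProj S)ᴴ = (coordProj S : Matrix ι ι 𝕜) := by
  rw [coordProj, diagonal_conjTranspose, diagonal_mul_diagonal]
  congr 1
  ext j
  by_cases hj : j ∈ S <;> simp [hj]

lemma posSemidef_coordProj [Fintype ι] (S : Finset ι) :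
    (coordProj S : Matrix ι ι 𝕜).PosSemidef :=
  posSemidef_diagonal_iff.mpr fun j => by split_ifs <;> simp

lemma rank_coordProj [Fintype ι] (S : Finset ι) :
    (coordProj S : Matrix ι ι 𝕜).rank = S.card := by
  rw [coordProj, rank_diagonal, Fintype.card_subtype]
  congr 1
  ext j
  simp

lemma coordProj_union {S T : Finset ι} (h : Disjoint S T) :
    (coordProj (S ∪ T) : Matrix ι ι 𝕜) = coordProj S + coordProj T := by
  rw [coordProj, coordProj, coordProj, diagonal_add]
  congr 1
  ext j
  by_cases hS : j ∈ S
  · simp [hS, Finset.disjoint_left.mp h hS]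
  · by_cases hT : j ∈ T <;> simp [hS, hT]

lemma fromBlocks_zero_coordProj {κ : Type*} [DecidableEq κ] (K : Finset κ) :
    fromBlocks (0 : Matrix ι ι 𝕜) 0 0 (coordProj K) = coordProj (K.map .inr) := by
  rw [coordProj, coordProj, ← diagonal_zero, fromBlocks_diagonal]
  congr 1
  ext (j | j) <;> simp

end CoordProj

lemma fromCols_mul_fromBlocks_zero_mul_conjTranspose {α m n₁ n₂ : Type*} [Fintype n₁]
    [Fintype n₂] [Semiring α] [StarRing α] (A : Matrix m n₁ α) (B : Matrix m n₂ α)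
    (M : Matrix n₂ n₂ α) :
    fromCols A B * fromBlocks (0 : Matrix n₁ n₁ α) 0 0 M * (fromCols A B)ᴴ = B * M * Bᴴ := by
  rw [conjTranspose_fromCols_eq_fromRows_conjTranspose, fromCols_mul_fromBlocks,
    fromCols_mul_fromRows]
  simp

section SumRate

variable {r1 r2 t1 t2 : ℕ}
  (H11 : Matrix (Fin r1) (Fin t1) ℂ) (H21 : Matrix (Fin r1) (Fin t2) ℂ)
  (H12 : Matrix (Fin r2) (Fin t1) ℂ) (H22 : Matrix (Fin r2) (Fin t2) ℂ)
  (T1 : Matrix (Fin t1 ⊕ Fin t2) (Fin t1 ⊕ Fin t2) ℂ) (T2 : Matrix (Fin t2) (Fin t2) ℂ)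

lemma crcSumRate_zero_inflation :
    crcSumRate H11 H21 H12 H22 T1 T2 0 =
      Real.log ((1 + fromCols H11 H21 * (T1 * T1ᴴ + fromBlocks 0 0 0 (T2 * T2ᴴ))
            * (fromCols H11 H21)ᴴ).det.re
          / (1 + fromCols H11 H21 * fromBlocks (0 : Matrix (Fin t1) (Fin t1) ℂ) 0 0 (T2 * T2ᴴ)
              * (fromCols H11 H21)ᴴ).det.re)
        + Real.log ((1 + fromCols H12 H22 * (T1 * T1ᴴ + fromBlocks 0 0 0 (T2 * T2ᴴ))
            * (fromCols H12 H22)ᴴ).det.re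
          / (1 + fromCols H12 H22 * (T1 * T1ᴴ) * (fromCols H12 H22)ᴴ).det.re) := by
  have hsplit {r : ℕ} (A : Matrix (Fin r) (Fin t1) ℂ) (B : Matrix (Fin r) (Fin t2) ℂ) :
      fromCols A B * (T1 * T1ᴴ + fromBlocks 0 0 0 (T2 * T2ᴴ)) * (fromCols A B)ᴴ
        = fromCols A B * (T1 * T1ᴴ) * (fromCols A B)ᴴ + B * (T2 * T2ᴴ) * Bᴴ := by
    rw [Matrix.mul_add, Matrix.add_mul, fromCols_mul_fromBlocks_zero_mul_conjTranspose]
  have hschur : H22 * T2 * (T2ᴴ * H22ᴴ) = H22 * (T2 * T2ᴴ) * H22ᴴ := by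
    simp only [Matrix.mul_assoc]
  simp only [crcSumRate, Matrix.zero_mul, Matrix.mul_zero, conjTranspose_zero, add_zero,
    det_fromBlocks_one₁₁, hsplit, fromCols_mul_fromBlocks_zero_mul_conjTranspose, hschur]
  congr 5 <;> abel

lemma tendsto_crcSumRate_div_log :
    Tendsto (fun P : ℝ =>
        crcSumRate H11 H21 H12 H22 ((√P : ℂ) • T1) ((√P : ℂ) • T2) 0 / Real.log P) atTop
      (nhds (((fromCols H11 H21 * (T1 * T1ᴴ + fromBlocks 0 0 0 (T2 * T2ᴴ))
              * (fromCols H11 H21)ᴴ).rank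
            - (fromCols H11 H21 * fromBlocks (0 : Matrix (Fin t1) (Fin t1) ℂ) 0 0 (T2 * T2ᴴ)
              * (fromCols H11 H21)ᴴ).rank : ℝ)
          + ((fromCols H12 H22 * (T1 * T1ᴴ + fromBlocks 0 0 0 (T2 * T2ᴴ))
              * (fromCols H12 H22)ᴴ).rank
            - (fromCols H12 H22 * (T1 * T1ᴴ) * (fromCols H12 H22)ᴴ).rank : ℝ))) := by
  set B : Matrix (Fin t1 ⊕ Fin t2) (Fin t1 ⊕ Fin t2) ℂ := fromBlocks 0 0 0 (T2 * T2ᴴ)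
  have hA := T1.posSemidef_self_mul_conjTranspose
  have hB : B.PosSemidef := by
    simpa [B, fromBlocks_conjTranspose, fromBlocks_multiply] using
      (fromBlocks (0 : Matrix (Fin t1) (Fin t1) ℂ) 0 0 T2).posSemidef_self_mul_conjTranspose
  refine ((tendsto_log_det_div_det_div_log _ (hA.add hB) hB).add
    (tendsto_log_det_div_det_div_log _ (hA.add hB) hA)).congr' ?_
  filter_upwards [eventually_ge_atTop 0] with P hP
  have hscale : fromBlocks 0 0 0 ((P : ℂ) • (T2 * T2ᴴ)) = (P : ℂ) • B := by
    simp [B, fromBlocks_smul]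
  rw [crcSumRate_zero_inflation, sqrt_smul_mul_conjTranspose_sqrt_smul _ hP,
    sqrt_smul_mul_conjTranspose_sqrt_smul _ hP, hscale, ← smul_add, add_div]
  -- the two sides differ only in the `RCLike` versus `Complex` spelling of `re` and of `ℝ → ℂ`
  rfl

end SumRate

theorem crc_sum_rate_scaling_general {r1 r2 t1 t2 : ℕ}
    (H11 : Matrix (Fin r1) (Fin t1) ℂ) (H21 : Matrix (Fin r1) (Fin t2) ℂ)
    (H12 : Matrix (Fin r2) (Fin t1) ℂ) (H22 : Matrix (Fin r2) (Fin t2) ℂ)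
    (hgen1 : ∀ A : Matrix (Fin t1 ⊕ Fin t2) (Fin t1 ⊕ Fin t2) ℂ, A.PosSemidef →
      (fromCols H11 H21 * A * (fromCols H11 H21)ᴴ).rank = min r1 A.rank)
    (hgen2 : ∀ A : Matrix (Fin t1 ⊕ Fin t2) (Fin t1 ⊕ Fin t2) ℂ, A.PosSemidef →
      (fromCols H12 H22 * A * (fromCols H12 H22)ᴴ).rank = min r2 A.rank)
    (s k : ℕ) (hs : s ≤ t1 + t2) (hk : k ≤ min t2 s) :
    ∃ (T1 : Matrix (Fin t1 ⊕ Fin t2) (Fin t1 ⊕ Fin t2) ℂ)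
      (T2 : Matrix (Fin t2) (Fin t2) ℂ)
      (W : ℝ → Matrix (Fin t2) (Fin t1 ⊕ Fin t2) ℂ),
      (T1 * T1ᴴ + fromBlocks 0 0 0 (T2 * T2ᴴ)).rank = s
      ∧ (T2 * T2ᴴ).rank = k
      ∧ Tendsto (fun P : ℝ =>
            crcSumRate H11 H21 H12 H22
              ((Real.sqrt P : ℂ) • T1) ((Real.sqrt P : ℂ) • T2) (W P) / Real.log P)
          atTop
          (nhds (((min r1 s : ℝ) - (min r1 k : ℝ))
            + ((min r2 s : ℝ) - (min r2 (s - k) : ℝ)))) := by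
  obtain ⟨hkt, hks⟩ := le_min_iff.mp hk
  obtain ⟨K, -, hK⟩ : ∃ K ⊆ (Finset.univ : Finset (Fin t2)), K.card = k :=
    Finset.exists_subset_card_eq (by simpa using hkt)
  obtain ⟨S, hSK, hS⟩ : ∃ S ⊆ (K.map (.inr : Fin t2 ↪ Fin t1 ⊕ Fin t2))ᶜ, S.card = s - k :=
    Finset.exists_subset_card_eq (by rw [Finset.card_compl, Finset.card_map, hK]; simp; omega)
  have hdisj : Disjoint S (K.map .inr) := Finset.disjoint_of_subset_left hSK disjoint_compl_left
  have hcard : (S ∪ K.map .inr).card = s := by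
    rw [Finset.card_union_of_disjoint hdisj, hS, Finset.card_map, hK]
    omega
  refine ⟨coordProj S, coordProj K, fun _ => 0, ?_, ?_, ?_⟩
  · rw [coordProj_mul_conjTranspose_self, coordProj_mul_conjTranspose_self,
      fromBlocks_zero_coordProj, ← coordProj_union hdisj, rank_coordProj, hcard]
  · rw [coordProj_mul_conjTranspose_self, rank_coordProj, hK]
  · convert tendsto_crcSumRate_div_log H11 H21 H12 H22 (coordProj S) (coordProj K) using 2
    simp only [coordProj_mul_conjTranspose_self, fromBlocks_zero_coordProj,
      ← coordProj_union hdisj, hgen1 _ (posSemidef_coordProj _), hgen2 _ (posSemidef_coordProj _),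
      rank_coordProj, hcard, Finset.card_map, hK, hS]
    push_cast [Nat.cast_sub hks]
    ring

/-- Theorem 2, per-realization form: under the genericity conditions on
`H̄1 = [H11 H21]` and `H̄2 = [H12 H22]`, for all integers `s, k` with `0 < s ≤ t1 + t2`
and `0 ≤ k ≤ min(t2, s)`, there exist `T1, T2` with
`rank(T1 T1* + diag(0, T2 T2*)) = s` and `rank(T2 T2*) = k`, and for each power level
an inflation factor `W(P)`, such that the sum rate with `T1, T2` replaced by
`√P·T1, √P·T2` and `W` by `W(P)` satisfies
`R_sum(P)/log P → [min(r1,s) − min(r1,k)] + [min(r2,s) − min(r2,s−k)]` as `P → ∞`. -/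
theorem crc_sum_rate_scaling {r1 r2 t1 t2 : ℕ}
    (H11 : Matrix (Fin r1) (Fin t1) ℂ) (H21 : Matrix (Fin r1) (Fin t2) ℂ)
    (H12 : Matrix (Fin r2) (Fin t1) ℂ) (H22 : Matrix (Fin r2) (Fin t2) ℂ)
    (hgen1 : ∀ A : Matrix (Fin t1 ⊕ Fin t2) (Fin t1 ⊕ Fin t2) ℂ, A.PosSemidef →
      (fromCols H11 H21 * A * (fromCols H11 H21)ᴴ).rank = min r1 A.rank)
    (hgen2 : ∀ A : Matrix (Fin t1 ⊕ Fin t2) (Fin t1 ⊕ Fin t2) ℂ, A.PosSemidef →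
      (fromCols H12 H22 * A * (fromCols H12 H22)ᴴ).rank = min r2 A.rank)
    (s k : ℕ) (hs0 : 0 < s) (hs : s ≤ t1 + t2) (hk : k ≤ min t2 s) :
    ∃ (T1 : Matrix (Fin t1 ⊕ Fin t2) (Fin t1 ⊕ Fin t2) ℂ)
      (T2 : Matrix (Fin t2) (Fin t2) ℂ)
      (W : ℝ → Matrix (Fin t2) (Fin t1 ⊕ Fin t2) ℂ),
      (T1 * T1ᴴ + fromBlocks 0 0 0 (T2 * T2ᴴ)).rank = s
      ∧ (T2 * T2ᴴ).rank = k
      ∧ Tendsto (fun P : ℝ =>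
            crcSumRate H11 H21 H12 H22
              ((Real.sqrt P : ℂ) • T1) ((Real.sqrt P : ℂ) • T2) (W P) / Real.log P)
          atTop
          (nhds (((min r1 s : ℝ) - (min r1 k : ℝ))
            + ((min r2 s : ℝ) - (min r2 (s - k) : ℝ)))) :=
  crc_sum_rate_scaling_general H11 H21 H12 H22 hgen1 hgen2 s k hs hk
end
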